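/- Let n be a positive integer divisible by 3 and let m ≥ 2 be an integer. Then the subgroup of GL(3,ℂ) generated by E, L_n and Y₁(m) (this is the group Z(n, m)) has order 3^m·n². -/

import Mathlib

open Matrix

/-- The matrix `E` with entries `E₀₁ = E₁₂ = E₂₀ = 1` and all other entries `0`. -/
noncomputable def Ematrix : Matrix (Fin 3) (Fin 3) ℂ := !![0, 1, 0; 0, 0, 1; 1, 0, 0]

/-- The matrix `L_n = diag(1, ν, ν⁻¹)` with `ν = exp(2πi/n)`. -/
noncomputable def Lmatrix (n : ℕ) : Matrix (Fin 3) (Fin 3) ℂ :=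
  Matrix.diagonal ![1, Complex.exp (2 * (Real.pi : ℂ) * Complex.I / (n : ℂ)),
    (Complex.exp (2 * (Real.pi : ℂ) * Complex.I / (n : ℂ)))⁻¹]

/-- The matrix `Y₁(m) = diag(μ, μω, μω²)`, with `μ = exp(2πi/3^m)` and `ω = exp(2πi/3)`. -/
noncomputable def Y1matrix (m : ℕ) : Matrix (Fin 3) (Fin 3) ℂ :=
  Matrix.diagonal ![Complex.exp (2 * (Real.pi : ℂ) * Complex.I / ((3 : ℂ) ^ m)),
    Complex.exp (2 * (Real.pi : ℂ) * Complex.I / ((3 : ℂ) ^ m)) *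
      Complex.exp (2 * (Real.pi : ℂ) * Complex.I / 3),
    Complex.exp (2 * (Real.pi : ℂ) * Complex.I / ((3 : ℂ) ^ m)) *
      Complex.exp (2 * (Real.pi : ℂ) * Complex.I / 3) ^ 2]

/-!
Put `s = 3^(m-1)`, `N = 3sn = 3^m n` and `ζ = exp(2πi/N)`. Then `L`, `Y` and `M = E L E⁻¹` are
diagonal with powers of `ζ` on the diagonal, and conjugation by `E` shifts diagonal entries
cyclically and maps `D = {Y^z L^x M^y}` into itself, so the group is `⟨E⟩ ⋉ D`, of order `3 |D|`.
Writing `n = 3k`, we have `Y^s = ωI = L^(2k) M^k` because `3 ∣ s`, and `L^n = M^n = 1`; these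
relations reduce every `Y^z L^x M^y` to one with `0 ≤ z < s` and `0 ≤ x, y < n`, and comparing
diagonal entries (whose product is `ζ^(3nz)`) shows that these `s n²` elements are distinct.
-/

theorem Subgroup.card_sup_of_le_normalizer_of_disjoint {G : Type*} [Group G] {H N : Subgroup G}
    (hle : H ≤ Subgroup.normalizer (N : Set G)) (hd : Disjoint H N) :
    Nat.card ↥(H ⊔ N) = Nat.card H * Nat.card N := by
  have hrange : Set.range (fun g : H × N ↦ (g.1 : G) * g.2) = (H ⊔ N : Subgroup G) := by
    rw [Subgroup.coe_mul_of_left_le_normalizer_right H N hle]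
    ext
    simp [Set.mem_mul]
  rw [← Nat.card_prod, ← Nat.card_range_of_injective (Subgroup.mul_injective_of_disjoint hd),
    hrange]
  rfl

theorem ZMod.eq_of_dvd_val_sub {c : ℕ} [NeZero c] {a b : ZMod c} (h : (c : ℤ) ∣ a.val - b.val) :
    a = b := by
  rw [← ZMod.natCast_zmod_val a, ← ZMod.natCast_zmod_val b, ZMod.natCast_eq_natCast_iff,
    Nat.modEq_iff_dvd, ← dvd_neg, neg_sub]
  exact h

section DiagZPow

variable {ι R : Type*} [Fintype ι] [DecidableEq ι] [CommRing R]

def diagZPow (ζ : Rˣ) : Multiplicative (ι → ℤ) →* GL ι R where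
  toFun v := ⟨diagonal fun i ↦ ↑(ζ ^ v.toAdd i), diagonal fun i ↦ ↑(ζ ^ (-v.toAdd i)),
    by simp [← Units.val_mul], by simp [← Units.val_mul]⟩
  map_one' := by ext : 1; simp
  map_mul' v w := by ext : 1; simp [_root_.zpow_add]

theorem diagZPow_val (ζ : Rˣ) (v : Multiplicative (ι → ℤ)) :
    (diagZPow ζ v : Matrix ι ι R) = diagonal fun i ↦ ↑(ζ ^ v.toAdd i) := rfl

theorem diagZPow_eq_one_iff {ζ : Rˣ} {N : ℕ} (hζ : IsPrimitiveRoot ζ N)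
    (v : Multiplicative (ι → ℤ)) : diagZPow ζ v = 1 ↔ ∀ i, (N : ℤ) ∣ v.toAdd i := by
  simp only [Units.ext_iff, diagZPow_val, Units.val_one, ← diagonal_one, diagonal_eq_diagonal_iff,
    Units.val_eq_one, hζ.zpow_eq_one_iff_dvd]

end DiagZPow

theorem Ematrix_mul_diagonal (d : Fin 3 → ℂ) :
    Ematrix * diagonal d = diagonal (d ∘ finRotate 3) * Ematrix := by
  ext i j
  fin_cases i <;> fin_cases j <;> simp [Ematrix, mul_apply, diagonal]

theorem Ematrix_pow_three : Ematrix ^ 3 = 1 := by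
  ext i j
  fin_cases i <;> fin_cases j <;> simp [Ematrix, pow_succ, mul_apply, Fin.sum_univ_three]

section CyclicShift

variable {E : GL (Fin 3) ℂ}

theorem orderOf_eq_three_of_val_eq_Ematrix (hE : (E : Matrix (Fin 3) (Fin 3) ℂ) = Ematrix) :
    orderOf E = 3 := by
  refine orderOf_eq_prime (Units.ext <| by simp [hE, Ematrix_pow_three]) fun h ↦ ?_
  have := congrArg (fun g : GL (Fin 3) ℂ ↦ (g : Matrix (Fin 3) (Fin 3) ℂ) 0 1) h
  simp [hE, Ematrix] at this

theorem conj_diagZPow_of_val_eq_Ematrix (hE : (E : Matrix (Fin 3) (Fin 3) ℂ) = Ematrix) (ζ : ℂˣ)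
    (v : Multiplicative (Fin 3 → ℤ)) :
    E * diagZPow ζ v * E⁻¹ = diagZPow ζ (.ofAdd (v.toAdd ∘ finRotate 3)) := by
  rw [mul_inv_eq_iff_eq_mul]
  ext : 1
  simp only [Units.val_mul, hE, diagZPow_val, Ematrix_mul_diagonal]
  rfl

theorem disjoint_zpowers_range_diagZPow (hE : (E : Matrix (Fin 3) (Fin 3) ℂ) = Ematrix)
    (ζ : ℂˣ) : Disjoint (Subgroup.zpowers E) (diagZPow ζ).range := by
  classical
  rw [Subgroup.disjoint_def]
  rintro _ hx ⟨v, rfl⟩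
  have hE3 := orderOf_eq_three_of_val_eq_Ematrix hE
  have hfin : IsOfFinOrder E := orderOf_pos_iff.mp (by simp [hE3])
  simp only [hfin.mem_zpowers_iff_mem_range_orderOf, hE3,
    Finset.mem_image, Finset.mem_range] at hx
  obtain ⟨j, hj, hEj⟩ := hx
  interval_cases j
  · simpa using hEj.symm
  · have := congrArg (fun g : GL (Fin 3) ℂ ↦ (g : Matrix (Fin 3) (Fin 3) ℂ) 0 1) hEj
    simp [hE, Ematrix, diagZPow_val] at this
  · have := congrArg (fun g : GL (Fin 3) ℂ ↦ (g : Matrix (Fin 3) (Fin 3) ℂ) 0 2) hEj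
    simp [hE, Ematrix, diagZPow_val, sq, mul_apply, Fin.sum_univ_three] at this

end CyclicShift

/-- With `ζ = exp(2πi/(3sn))` and `3s = 3^m`, the exponents of `ζ` on the diagonal of
`Y^z L^x M^y`: `Y = diag(ζ^n, ζ^(n+sn), ζ^(n+2sn))`, `L = diag(1, ζ^(3s), ζ^(-3s))` and
`M = E L E⁻¹ = diag(ζ^(3s), ζ^(-3s), 1)`. -/
def expVec (n s : ℕ) : ℤ × ℤ × ℤ →+ (Fin 3 → ℤ) :=
  AddMonoidHom.mk' (fun w ↦ ![n * w.1 + 3 * s * w.2.2,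
      (n + s * n) * w.1 + 3 * s * w.2.1 - 3 * s * w.2.2,
      (n + 2 * s * n) * w.1 - 3 * s * w.2.1])
    fun v w ↦ by ext i; fin_cases i <;> simp <;> ring

section DiagParam

variable {R : Type*} [CommRing R]

def diagParam (ζ : Rˣ) (n s : ℕ) : Multiplicative (ℤ × ℤ × ℤ) →* GL (Fin 3) R :=
  (diagZPow ζ).comp (AddMonoidHom.toMultiplicative (expVec n s))

theorem diagParam_ofAdd (ζ : Rˣ) (n s : ℕ) (w : ℤ × ℤ × ℤ) :
    diagParam ζ n s (.ofAdd w) = diagZPow ζ (.ofAdd (expVec n s w)) := rfl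

theorem diagParam_ofAdd_eq_mul (ζ : Rˣ) (n s : ℕ) (z x y : ℤ) :
    diagParam ζ n s (.ofAdd (z, x, y)) = diagParam ζ n s (.ofAdd (1, 0, 0)) ^ z *
      diagParam ζ n s (.ofAdd (0, 1, 0)) ^ x * diagParam ζ n s (.ofAdd (0, 0, 1)) ^ y := by
  simp only [← map_zpow, ← map_mul, ← ofAdd_zsmul, ← ofAdd_add]
  congr 2
  ext <;> simp

def boxLift {s n : ℕ} (b : ZMod s × ZMod n × ZMod n) : ℤ × ℤ × ℤ :=
  (b.1.val, b.2.1.val, b.2.2.val)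

variable {ζ : Rˣ} {n s : ℕ}

theorem diagParam_eq_one_iff (hζ : IsPrimitiveRoot ζ (3 * s * n)) (z x y : ℤ) :
    diagParam ζ n s (.ofAdd (z, x, y)) = 1 ↔ (3 * s * n : ℤ) ∣ n * z + 3 * s * y ∧
      (3 * s * n : ℤ) ∣ (n + s * n) * z + 3 * s * x - 3 * s * y ∧
      (3 * s * n : ℤ) ∣ (n + 2 * s * n) * z - 3 * s * x := by
  rw [diagParam_ofAdd, diagZPow_eq_one_iff hζ, Fin.forall_fin_succ, Fin.forall_fin_succ,
    Fin.forall_fin_one]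
  simp [expVec]

theorem diagParam_boxLift_injective [NeZero n] [NeZero s] (hζ : IsPrimitiveRoot ζ (3 * s * n)) :
    Function.Injective fun b : ZMod s × ZMod n × ZMod n ↦
      diagParam ζ n s (.ofAdd (boxLift b)) := by
  rintro ⟨z, x, y⟩ ⟨z', x', y'⟩ h
  simp only [boxLift] at h
  rw [← div_eq_one, ← map_div, ← ofAdd_sub, Prod.mk_sub_mk, Prod.mk_sub_mk,
    diagParam_eq_one_iff hζ] at h
  obtain ⟨h0, h1, h2⟩ := h
  have hs0 : (s : ℤ) ≠ 0 := by exact_mod_cast NeZero.ne s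
  have hn0 : (n : ℤ) ≠ 0 := by exact_mod_cast NeZero.ne n
  have hz : z = z' := by
    refine ZMod.eq_of_dvd_val_sub
      ((mul_dvd_mul_iff_left (by positivity : (3 * n : ℤ) ≠ 0)).mp ?_)
    convert dvd_sub (dvd_add (dvd_add h0 h1) h2)
      (dvd_mul_right (3 * s * n : ℤ) ((z.val : ℤ) - z'.val)) using 1 <;> ring
  subst hz
  simp only [sub_self, mul_zero, zero_add, zero_sub] at h0 h2
  refine Prod.ext rfl (Prod.ext (ZMod.eq_of_dvd_val_sub ?_) (ZMod.eq_of_dvd_val_sub ?_))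
  · refine (mul_dvd_mul_iff_left (by positivity : (3 * s : ℤ) ≠ 0)).mp ?_
    convert dvd_neg.mpr h2 using 1
    ring
  · exact (mul_dvd_mul_iff_left (by positivity : (3 * s : ℤ) ≠ 0)).mp h0

theorem exists_boxLift_diagParam_eq [NeZero n] [NeZero s] (hζ : IsPrimitiveRoot ζ (3 * s * n))
    (hn : 3 ∣ n) (hs : 3 ∣ s) (w : ℤ × ℤ × ℤ) :
    ∃ b : ZMod s × ZMod n × ZMod n,
      diagParam ζ n s (.ofAdd (boxLift b)) = diagParam ζ n s (.ofAdd w) := by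
  obtain ⟨z, x, y⟩ := w
  obtain ⟨k, rfl⟩ := hn
  obtain ⟨t, rfl⟩ := hs
  obtain ⟨q, hq⟩ : ∃ q, z / ((3 * t : ℕ) : ℤ) = q := ⟨_, rfl⟩
  refine ⟨((z : ℤ), ((x + 2 * k * q : ℤ) : ZMod (3 * k)), ((y + k * q : ℤ) : ZMod (3 * k))), ?_⟩
  rw [← div_eq_one, ← map_div, ← ofAdd_sub]
  simp only [boxLift, ZMod.val_intCast, Int.emod_def, Prod.mk_sub_mk, hq]
  rw [diagParam_eq_one_iff hζ]
  generalize (x + 2 * k * q) / ((3 * k : ℕ) : ℤ) = a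
  generalize (y + k * q) / ((3 * k : ℕ) : ℤ) = c
  push_cast
  exact ⟨⟨-c, by ring⟩, ⟨-t * q - a + c, by ring⟩, ⟨-q - 2 * t * q + a, by ring⟩⟩

theorem bijective_boxLift_rangeRestrict_diagParam [NeZero n] [NeZero s]
    (hζ : IsPrimitiveRoot ζ (3 * s * n)) (hn : 3 ∣ n) (hs : 3 ∣ s) :
    Function.Bijective fun b : ZMod s × ZMod n × ZMod n ↦
      (diagParam ζ n s).rangeRestrict (.ofAdd (boxLift b)) := by
  refine ⟨fun b b' h ↦ diagParam_boxLift_injective hζ (congrArg Subtype.val h), ?_⟩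
  rintro ⟨_, w, rfl⟩
  obtain ⟨b, hb⟩ := exists_boxLift_diagParam_eq hζ hn hs w.toAdd
  exact ⟨b, Subtype.ext hb⟩

theorem card_range_diagParam [NeZero n] [NeZero s] (hζ : IsPrimitiveRoot ζ (3 * s * n))
    (hn : 3 ∣ n) (hs : 3 ∣ s) : Nat.card (diagParam ζ n s).range = s * n ^ 2 := by
  rw [← Nat.card_eq_of_bijective _ (bijective_boxLift_rangeRestrict_diagParam hζ hn hs),
    Nat.card_prod, Nat.card_prod, Nat.card_zmod, Nat.card_zmod, sq]

theorem range_diagParam_le (ζ : Rˣ) (n s : ℕ) :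
    (diagParam ζ n s).range ≤ (diagZPow ζ).range := by
  rintro _ ⟨w, rfl⟩
  exact ⟨_, rfl⟩

end DiagParam

section GeneratedSubgroup

variable {E : GL (Fin 3) ℂ}

theorem conj_mem_range_diagParam (hE : (E : Matrix (Fin 3) (Fin 3) ℂ) = Ematrix) (ζ : ℂˣ)
    {n : ℕ} (hn : 3 ∣ n) (s : ℕ) {g : GL (Fin 3) ℂ} (hg : g ∈ (diagParam ζ n s).range) :
    E * g * E⁻¹ ∈ (diagParam ζ n s).range := by
  obtain ⟨⟨z, x, y⟩, rfl⟩ := hg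
  obtain ⟨k, rfl⟩ := hn
  refine ⟨.ofAdd (z, 2 * k * z - y, k * z + x - y), ?_⟩
  change _ = E * diagParam ζ _ s (.ofAdd (z, x, y)) * E⁻¹
  rw [diagParam_ofAdd, diagParam_ofAdd, conj_diagZPow_of_val_eq_Ematrix hE]
  congr 2
  ext i
  fin_cases i <;> simp [expVec] <;> ring

theorem closure_eq_zpowers_sup_range_diagParam (hE : (E : Matrix (Fin 3) (Fin 3) ℂ) = Ematrix)
    (ζ : ℂˣ) (n s : ℕ) :
    Subgroup.closure {E, diagParam ζ n s (.ofAdd (0, 1, 0)), diagParam ζ n s (.ofAdd (1, 0, 0))}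
      = Subgroup.zpowers E ⊔ (diagParam ζ n s).range := by
  have hM :
      diagParam ζ n s (.ofAdd (0, 0, 1)) = E * diagParam ζ n s (.ofAdd (0, 1, 0)) * E⁻¹ := by
    rw [diagParam_ofAdd, diagParam_ofAdd, conj_diagZPow_of_val_eq_Ematrix hE]
    congr 2
    ext i
    fin_cases i <;> simp [expVec]
  apply le_antisymm
  · rw [Subgroup.closure_le]
    rintro _ (rfl | rfl | rfl)
    · exact Subgroup.mem_sup_left (Subgroup.mem_zpowers _)
    · exact Subgroup.mem_sup_right ⟨_, rfl⟩
    · exact Subgroup.mem_sup_right ⟨_, rfl⟩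
  · refine sup_le (Subgroup.zpowers_le.mpr (Subgroup.subset_closure (by simp))) ?_
    set C := Subgroup.closure {E, diagParam ζ n s (.ofAdd (0, 1, 0)),
      diagParam ζ n s (.ofAdd (1, 0, 0))}
    have hE' : E ∈ C := Subgroup.subset_closure (by simp)
    have hL : diagParam ζ n s (.ofAdd (0, 1, 0)) ∈ C := Subgroup.subset_closure (by simp)
    have hY : diagParam ζ n s (.ofAdd (1, 0, 0)) ∈ C := Subgroup.subset_closure (by simp)
    rintro _ ⟨⟨z, x, y⟩, rfl⟩
    change diagParam ζ n s (.ofAdd (z, x, y)) ∈ C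
    rw [diagParam_ofAdd_eq_mul, hM]
    exact mul_mem (mul_mem (zpow_mem hY z) (zpow_mem hL x))
      (zpow_mem (mul_mem (mul_mem hE' hL) (inv_mem hE')) y)

end GeneratedSubgroup

noncomputable def zetaUnit (N : ℕ) : ℂˣ :=
  Units.mk0 (Complex.exp (2 * Real.pi * Complex.I / N)) (Complex.exp_ne_zero _)

theorem isPrimitiveRoot_zetaUnit {N : ℕ} (hN : N ≠ 0) : IsPrimitiveRoot (zetaUnit N) N :=
  IsPrimitiveRoot.coe_units_iff.mp (Complex.isPrimitiveRoot_exp N hN)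

theorem zetaUnit_mul_pow (a b : ℕ) (hb : b ≠ 0) :
    (zetaUnit (a * b) : ℂ) ^ b = Complex.exp (2 * Real.pi * Complex.I / a) := by
  rw [zetaUnit, Units.val_mk0, ← Complex.exp_nat_mul, Nat.cast_mul, ← div_div,
    mul_div_cancel₀ _ (Nat.cast_ne_zero.mpr hb : (b : ℂ) ≠ 0)]

theorem Lmatrix_eq_diagParam (n s : ℕ) (hs : s ≠ 0) :
    Lmatrix n = (diagParam (zetaUnit (3 * s * n)) n s (.ofAdd (0, 1, 0)) : Matrix _ _ ℂ) := by
  have hν := zetaUnit_mul_pow n (3 * s) (by positivity)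
  rw [mul_comm n] at hν
  rw [Lmatrix, diagParam_ofAdd, diagZPow_val]
  congr 1
  ext i
  fin_cases i <;> simp [expVec, ← hν, _root_.zpow_neg] <;> norm_cast

theorem Y1matrix_eq_diagParam (m n s : ℕ) (hm : 3 ^ m = 3 * s) (hn : n ≠ 0) :
    Y1matrix m = (diagParam (zetaUnit (3 * s * n)) n s (.ofAdd (1, 0, 0)) : Matrix _ _ ℂ) := by
  have hs : s ≠ 0 := by rintro rfl; simp at hm
  have hμ := zetaUnit_mul_pow (3 * s) n hn
  have hω := zetaUnit_mul_pow 3 (s * n) (by positivity)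
  rw [← mul_assoc, Nat.cast_ofNat] at hω
  rw [show ((3 * s : ℕ) : ℂ) = 3 ^ m by exact_mod_cast hm.symm] at hμ
  rw [Y1matrix, diagParam_ofAdd, diagZPow_val]
  congr 1
  ext i
  fin_cases i <;> simp [expVec, ← hμ, ← hω, ← pow_mul, ← pow_add] <;> norm_cast
  ring_nf

/-- The group `Z(n, m)`, generated by `E`, `L_n` and `Y₁(m)` inside `GL(3,ℂ)`,
has order `3^m·n²`. -/
theorem Znm_order (n : ℕ) (hn : 0 < n) (hn3 : 3 ∣ n)
    (m : ℕ) (hm : 2 ≤ m)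
    (E L Y : GL (Fin 3) ℂ)
    (hE : E.val = Ematrix) (hL : L.val = Lmatrix n) (hY : Y.val = Y1matrix m) :
    Nat.card ↥(Subgroup.closure ({E, L, Y} : Set (GL (Fin 3) ℂ)))
      = 3 ^ m * n ^ 2 := by
  set s := 3 ^ (m - 1)
  have h3s : 3 ^ m = 3 * s := by rw [← pow_succ']; congr 1; omega
  have hs3 : 3 ∣ s := dvd_pow_self 3 (by omega)
  have : NeZero n := ⟨hn.ne'⟩
  have : NeZero s := ⟨by positivity⟩
  set ζ := zetaUnit (3 * s * n)
  have hζ : IsPrimitiveRoot ζ (3 * s * n) := isPrimitiveRoot_zetaUnit (by positivity)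
  have hLD : L = diagParam ζ n s (.ofAdd (0, 1, 0)) :=
    Units.ext (hL.trans (Lmatrix_eq_diagParam n s (NeZero.ne s)))
  have hYD : Y = diagParam ζ n s (.ofAdd (1, 0, 0)) :=
    Units.ext (hY.trans (Y1matrix_eq_diagParam m n s h3s hn.ne'))
  have : Finite ((diagParam ζ n s).range : Set (GL (Fin 3) ℂ)) :=
    Finite.of_surjective _ (bijective_boxLift_rangeRestrict_diagParam hζ hn3 hs3).2
  have hnorm : Subgroup.zpowers E ≤ Subgroup.normalizer ((diagParam ζ n s).range : Set _) :=
    Subgroup.zpowers_le.mpr <| Subgroup.mem_normalizer_fintype fun _ ↦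
      conj_mem_range_diagParam hE ζ hn3 s
  have hdisj := (disjoint_zpowers_range_diagZPow hE ζ).mono_right (range_diagParam_le ζ n s)
  rw [hLD, hYD, closure_eq_zpowers_sup_range_diagParam hE,
    Subgroup.card_sup_of_le_normalizer_of_disjoint hnorm hdisj, Nat.card_zpowers,
    orderOf_eq_three_of_val_eq_Ematrix hE, card_range_diagParam hζ hn3 hs3, h3s]
  ring
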